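/- arXiv:1906.09935 — 2 statements merged into one kernel-verified Lean document; each statement's English description precedes it below -/
import Mathlib

section
/- Let f, g₁, g₂ be holomorphic on D ⊆ ℂ with f ≠ 0 everywhere. Then ‖Φ‖² > 0 for Φ = (f(g₁g₂+1), i f(g₁g₂−1), f(g₁+g₂), i f(g₁−g₂)) if and only if (|g₁|²−1)(|g₂|²−1) > 0, i.e., either both |g₁| > 1 and |g₂| > 1 or both |g₁| < 1 and |g₂| < 1 at each point. -/
open Complex

/-- Indefinite Hermitian square ‖a‖² = |a₁|²+|a₂|²−|a₃|²−|a₄|². -/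
noncomputable def nsq (x : Fin 4 → ℂ) : ℝ :=
  Complex.normSq (x 0) + Complex.normSq (x 1) - Complex.normSq (x 2) - Complex.normSq (x 3)

/-- Weierstrass map Φ = (f(g₁g₂+1), i f(g₁g₂−1), f(g₁+g₂), i f(g₁−g₂)). -/
noncomputable def PhiW (f g₁ g₂ : ℂ → ℂ) (t : ℂ) : Fin 4 → ℂ :=
  ![f t * (g₁ t * g₂ t + 1), Complex.I * (f t * (g₁ t * g₂ t - 1)),
    f t * (g₁ t + g₂ t), Complex.I * (f t * (g₁ t - g₂ t))]

/-! By the parallelogram law, `|ab+1|² + |ab-1|² - |a+b|² - |a-b|²` equals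
`2(|ab|² + 1 - |a|² - |b|²) = 2(|a|²-1)(|b|²-1)`, so `‖Φ‖² = 2|f|²(|g₁|²-1)(|g₂|²-1)`,
whose sign is that of `(|g₁|²-1)(|g₂|²-1)` wherever `f ≠ 0`. -/

namespace Complex

theorem normSq_add_add_normSq_sub (z w : ℂ) :
    normSq (z + w) + normSq (z - w) = 2 * (normSq z + normSq w) := by
  rw [normSq_add, normSq_sub]
  ring

theorem normSq_mul_add_one_add_sub_normSq_add_sub (a b : ℂ) :
    normSq (a * b + 1) + normSq (a * b - 1) - normSq (a + b) - normSq (a - b) =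
      2 * ((normSq a - 1) * (normSq b - 1)) := by
  have hab := normSq_add_add_normSq_sub (a * b) 1
  have hsum := normSq_add_add_normSq_sub a b
  rw [normSq_mul, normSq_one] at hab
  linarith

theorem sub_one_pos_normSq_iff (z : ℂ) : 0 < normSq z - 1 ↔ 1 < ‖z‖ := by
  rw [sub_pos, ← Complex.sq_norm, one_lt_sq_iff₀ (norm_nonneg z)]

theorem sub_one_neg_normSq_iff (z : ℂ) : normSq z - 1 < 0 ↔ ‖z‖ < 1 := by
  rw [sub_neg, ← Complex.sq_norm, sq_lt_one_iff₀ (norm_nonneg z)]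

end Complex

theorem nsq_PhiW (f g₁ g₂ : ℂ → ℂ) (t : ℂ) :
    nsq (PhiW f g₁ g₂ t) =
      2 * normSq (f t) * ((normSq (g₁ t) - 1) * (normSq (g₂ t) - 1)) := by
  have h := normSq_mul_add_one_add_sub_normSq_add_sub (g₁ t) (g₂ t)
  simp only [nsq, PhiW, Matrix.cons_val_zero, Matrix.cons_val_one, Matrix.cons_val_two,
    Matrix.cons_val_three, Matrix.head_cons, Matrix.tail_cons, normSq_mul, normSq_I, one_mul]
  linear_combination normSq (f t) * h

theorem stmt7_general (D : Set ℂ) (f g₁ g₂ : ℂ → ℂ)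
    (hf0 : ∀ t ∈ D, f t ≠ 0) :
    ∀ t ∈ D,
      (0 < nsq (PhiW f g₁ g₂ t) ↔
        0 < (Complex.normSq (g₁ t) - 1) * (Complex.normSq (g₂ t) - 1)) ∧
      (0 < (Complex.normSq (g₁ t) - 1) * (Complex.normSq (g₂ t) - 1) ↔
        ((1 < ‖g₁ t‖ ∧ 1 < ‖g₂ t‖) ∨
         (‖g₁ t‖ < 1 ∧ ‖g₂ t‖ < 1))) := by
  intro t ht
  have hf : 0 < 2 * normSq (f t) := mul_pos two_pos (normSq_pos.2 (hf0 t ht))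
  refine ⟨?_, ?_⟩
  · rw [nsq_PhiW, mul_pos_iff_of_pos_left hf]
  · rw [mul_pos_iff, sub_one_pos_normSq_iff, sub_one_pos_normSq_iff,
      sub_one_neg_normSq_iff, sub_one_neg_normSq_iff]

/-- With f ≠ 0 everywhere, ‖Φ‖² > 0 iff (|g₁|²−1)(|g₂|²−1) > 0, i.e. iff
either both |g₁| > 1, |g₂| > 1, or both |g₁| < 1, |g₂| < 1. -/
theorem stmt7 (D : Set ℂ) (hD : IsOpen D) (f g₁ g₂ : ℂ → ℂ)
    (hf : DifferentiableOn ℂ f D)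
    (hg₁ : DifferentiableOn ℂ g₁ D) (hg₂ : DifferentiableOn ℂ g₂ D)
    (hf0 : ∀ t ∈ D, f t ≠ 0) :
    ∀ t ∈ D,
      (0 < nsq (PhiW f g₁ g₂ t) ↔
        0 < (Complex.normSq (g₁ t) - 1) * (Complex.normSq (g₂ t) - 1)) ∧
      (0 < (Complex.normSq (g₁ t) - 1) * (Complex.normSq (g₂ t) - 1) ↔
        ((1 < ‖g₁ t‖ ∧ 1 < ‖g₂ t‖) ∨
         (‖g₁ t‖ < 1 ∧ ‖g₂ t‖ < 1))) :=
  stmt7_general D f g₁ g₂ hf0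
end

section
/- For a = ((g₁g₂+1), i(g₁g₂−1), (g₁+g₂), i(g₁−g₂)) with g₁, g₂ holomorphic, the 4×4 determinant of the column vectors (a, ā, a', ā') equals 4(|g₁'|²(|g₂|²−1)² − |g₂'|²(|g₁|²−1)²). -/
/-!
Write `a = vecA i g₁ g₂` with `vecA ω a b = (ab + 1, ω(ab - 1), a + b, ω(a - b))`. Then `ā` is
`vecA (-i) ḡ₁ ḡ₂`, and by the product rule `a'` and `ā'` are the tangent vectors `tangentA`.
Treating `ω, g₁, g₂, ḡ₁, ḡ₂` and the four derivatives as independent ring elements, the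
determinant is the polynomial identity
`det = -4ω² (g₁' ḡ₁' (g₂ ḡ₂ - 1)² - g₂' ḡ₂' (g₁ ḡ₁ - 1)²)`,
and `ω² = -1`, `z z̄ = |z|²` give the claim.
-/

open Complex

noncomputable def aV (g₁ g₂ : ℂ → ℂ) (t : ℂ) : Fin 4 → ℂ :=
  ![g₁ t * g₂ t + 1, Complex.I * (g₁ t * g₂ t - 1),
    g₁ t + g₂ t, Complex.I * (g₁ t - g₂ t)]

section
variable {R : Type*} [CommRing R]

def vecA (ω a b : R) : Fin 4 → R := ![a * b + 1, ω * (a * b - 1), a + b, ω * (a - b)]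

def tangentA (ω a b a' b' : R) : Fin 4 → R :=
  ![a' * b + a * b', ω * (a' * b + a * b'), a' + b', ω * (a' - b')]

theorem det_vecA_tangentA (ω a b a' b' p q p' q' : R) :
    Matrix.det (Matrix.of fun i j : Fin 4 =>
      ![vecA ω a b, vecA (-ω) p q, tangentA ω a b a' b', tangentA (-ω) p q p' q'] j i)
    = -4 * ω ^ 2 * (a' * p' * (b * q - 1) ^ 2 - b' * q' * (a * p - 1) ^ 2) := by
  simp [Matrix.det_succ_row_zero, Fin.sum_univ_succ, vecA, tangentA, Fin.succAbove]
  ring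

variable [StarRing R]

theorem star_vecA (ω a b : R) :
    (fun k => star (vecA ω a b k)) = vecA (star ω) (star a) (star b) := by
  funext k; fin_cases k <;> simp [vecA]

theorem star_tangentA (ω a b a' b' : R) :
    (fun k => star (tangentA ω a b a' b' k)) =
      tangentA (star ω) (star a) (star b) (star a') (star b') := by
  funext k; fin_cases k <;> simp [tangentA, mul_comm, add_comm]

end

theorem hasDerivAt_vecA {𝕜 : Type*} [NontriviallyNormedField 𝕜] (ω : 𝕜) {f g : 𝕜 → 𝕜}
    {f' g' x : 𝕜} (hf : HasDerivAt f f' x) (hg : HasDerivAt g g' x) :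
    HasDerivAt (fun z => vecA ω (f z) (g z)) (tangentA ω (f x) (g x) f' g') x := by
  have hfg := hf.mul hg
  refine hasDerivAt_pi.2 fun k => ?_
  fin_cases k
  · simpa [vecA, tangentA] using hfg.add_const 1
  · simpa [vecA, tangentA] using (hfg.sub_const 1).const_mul ω
  · simpa [vecA, tangentA] using hf.fun_add hg
  · simpa [vecA, tangentA] using (hf.fun_sub hg).const_mul ω

/-- det(a, ā, a', ā') = 4(|g₁'|²(|g₂|²−1)² − |g₂'|²(|g₁|²−1)²). -/
theorem stmt13 (D : Set ℂ) (hD : IsOpen D) (g₁ g₂ : ℂ → ℂ)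
    (hg₁ : DifferentiableOn ℂ g₁ D) (hg₂ : DifferentiableOn ℂ g₂ D) :
    ∀ t ∈ D,
      Matrix.det (Matrix.of fun i j : Fin 4 =>
        ![aV g₁ g₂ t,
          fun k => star (aV g₁ g₂ t k),
          fun k => deriv (fun z => aV g₁ g₂ z k) t,
          fun k => star (deriv (fun z => aV g₁ g₂ z k) t)] j i)
      = ((4 * (Complex.normSq (deriv g₁ t) * (Complex.normSq (g₂ t) - 1)^2
              - Complex.normSq (deriv g₂ t) * (Complex.normSq (g₁ t) - 1)^2) : ℝ) : ℂ) := by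
  intro t ht
  have h₁ := ((hg₁ t ht).differentiableAt (hD.mem_nhds ht)).hasDerivAt
  have h₂ := ((hg₂ t ht).differentiableAt (hD.mem_nhds ht)).hasDerivAt
  have hderiv (k : Fin 4) : deriv (fun z => aV g₁ g₂ z k) t =
      tangentA I (g₁ t) (g₂ t) (deriv g₁ t) (deriv g₂ t) k :=
    (hasDerivAt_pi.1 (hasDerivAt_vecA I h₁ h₂) k).deriv
  have haV : aV g₁ g₂ t = vecA I (g₁ t) (g₂ t) := rfl
  simp only [hderiv]
  rw [haV, star_vecA, star_tangentA, star_def, conj_I, det_vecA_tangentA]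
  push_cast
  simp only [← mul_conj, I_sq]
  ring
end
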